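/- (Lemma 3: correctness of hypertree-decomposition-based rederivation.) Let r be a Datalog rule with a complete hypertree decomposition with node set N, let I be a dataset and Δ a set of facts (the overdeleted facts). Suppose for each node p we are given sets A_p ⊆ Π_p[I] (the surviving instantiations) and re_p ⊇ Π_p[I] \ A_p (the overdeleted instantiations), and define the recovered set R_p = { t ∈ re_p | t ∈ Π_p[I] }. Then: (i) A_p ∪ R_p = Π_p[I] for every node p (the node invariant is restored); and (ii) letting Δ_R be any subset of { h(r)τ | τ ∈ π_{var(h(r))}( ⋈_{p∈N} (A_p ∪ R_p) ) } ∩ Δ, one has Δ_R ∪ { f ∈ Δ | f ∈ r[I] } = r[I] ∩ Δ; in particular the rederivation step returns exactly r[I] ∩ Δ. -/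
import Mathlib


namespace Datalog

/-- An atom `P(t₁,…,tₖ)`: a predicate symbol applied to a list of terms, where
`Sum.inl v` denotes the variable `v` and `Sum.inr c` denotes the constant `c`. -/
structure Atom where
  pred : ℕ
  args : List (ℕ ⊕ ℕ)
deriving DecidableEq

/-- A fact: a variable-free atom, i.e. a predicate applied to constants only. -/
structure Fact where
  pred : ℕ
  args : List ℕ
deriving DecidableEq

/-- Applying a substitution `σ` (a map from variables to constants) to an atom. -/
def Atom.subst (A : Atom) (σ : ℕ → ℕ) : Fact :=
  ⟨A.pred, A.args.map (Sum.elim σ id)⟩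

/-- The set of variables occurring in an atom. -/
def Atom.vars (A : Atom) : Set ℕ := { v | Sum.inl v ∈ A.args }

/-- A Datalog rule: a head atom and a finite set of body atoms, which is safe:
every variable of the head occurs in some body atom. -/
structure Rule where
  head : Atom
  body : Finset Atom
  safe : ∀ v ∈ head.vars, ∃ B ∈ body, v ∈ B.vars

/-- `r[I] = { h(rσ) | b(rσ) ⊆ I }`. -/
def Rule.eval (r : Rule) (I : Set Fact) : Set Fact :=
  { f | ∃ σ : ℕ → ℕ, (∀ B ∈ r.body, B.subst σ ∈ I) ∧ f = r.head.subst σ }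

/-- `r[I ∸ Δ] = { h(rσ) | b(rσ) ⊆ I and b(rσ) ∩ Δ ≠ ∅ }`. -/
def Rule.evalDelta (r : Rule) (I Δ : Set Fact) : Set Fact :=
  { f | ∃ σ : ℕ → ℕ, (∀ B ∈ r.body, B.subst σ ∈ I) ∧
        (∃ B ∈ r.body, B.subst σ ∈ Δ) ∧ f = r.head.subst σ }

/-- `Π[I] = ⋃_{r ∈ Π} r[I]`. -/
def progEval (P : Set Rule) (I : Set Fact) : Set Fact := ⋃ r ∈ P, r.eval I

/-- `Π[I ∸ Δ] = ⋃_{r ∈ Π} r[I ∸ Δ]`. -/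
def progEvalDelta (P : Set Rule) (I Δ : Set Fact) : Set Fact := ⋃ r ∈ P, r.evalDelta I Δ

/-- `I_0 = E`, `I_{i+1} = I_i ∪ Π[I_i]`. -/
def matSeq (P : Set Rule) (E : Set Fact) : ℕ → Set Fact
  | 0 => E
  | n + 1 => matSeq P E n ∪ progEval P (matSeq P E n)

/-- The materialisation `mat(Π, E) = ⋃_{i ≥ 0} I_i`. -/
def mat (P : Set Rule) (E : Set Fact) : Set Fact := ⋃ n, matSeq P E n

/-- A tuple over a set of variables `V`: an assignment of a constant to each variable of `V`. -/
def Tuple (V : Set ℕ) : Type := V → ℕ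

/-- The restriction `σ|_V` of a substitution `σ` to the variables `V`. -/
def restrictT (V : Set ℕ) (σ : ℕ → ℕ) : Tuple V := fun v => σ v.1

/-- Extension of a tuple to a total substitution (an arbitrary default value
outside of its domain; all uses below only depend on values inside the domain). -/
noncomputable def extendT {V : Set ℕ} (t : Tuple V) : ℕ → ℕ := fun v =>
  letI := Classical.propDecidable (v ∈ V)
  if h : v ∈ V then t ⟨v, h⟩ else 0

/-- Two tuples agree on every variable on which both are defined. -/
def agreeOn {Vp Vq : Set ℕ} (t : Tuple Vp) (s : Tuple Vq) : Prop :=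
  ∀ v (h1 : v ∈ Vp) (h2 : v ∈ Vq), t ⟨v, h1⟩ = s ⟨v, h2⟩

/-- The natural join `⋈_p R_p` of a family of relations `R p` of tuples over `χ p`:
the set of tuples over `⋃ p, χ p` whose restriction to each `χ p` lies in `R p`. -/
def natJoin {ι : Type} (χ : ι → Set ℕ) (R : ∀ p, Set (Tuple (χ p))) :
    Set (Tuple (⋃ p, χ p)) :=
  { t | ∀ p, restrictT (χ p) (extendT t) ∈ R p }

/-- The projection `π_O` of a relation: restriction of each tuple to the variables `O`. -/
noncomputable def projT {V : Set ℕ} (O : Set ℕ) (Rel : Set (Tuple V)) : Set (Tuple O) :=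
  (fun t : Tuple V => restrictT O (extendT t)) '' Rel

/-- The semijoin `R_p ⋉ R_q`: tuples of `R_p` for which some tuple of `R_q`
agrees with them on the common variables. -/
def semijoin {Vp Vq : Set ℕ} (Rp : Set (Tuple Vp)) (Rq : Set (Tuple Vq)) : Set (Tuple Vp) :=
  { t ∈ Rp | ∃ s ∈ Rq, agreeOn t s }

/-- A rooted tree on the node type `ι`, given by a parent function under which
every node reaches the root. -/
structure RootedTree (ι : Type) where
  root : ι
  parent : ι → ι
  parent_root : parent root = root
  reaches_root : ∀ p, ∃ n, parent^[n] p = root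

namespace RootedTree

variable {ι : Type}

/-- `p` and `q` are joined by an edge of the tree. -/
def Adj (T : RootedTree ι) (p q : ι) : Prop :=
  p ≠ q ∧ (T.parent p = q ∨ T.parent q = p)

/-- `c` is a child of `p`. -/
def childOf (T : RootedTree ι) (c p : ι) : Prop :=
  T.parent c = p ∧ c ≠ T.root

/-- The set of nodes of the subtree `T_p` rooted at `p`. -/
def descendants (T : RootedTree ι) (p : ι) : Set ι :=
  { q | ∃ n, T.parent^[n] q = p }

/-- The set of nodes `S` induces a connected subtree of `T`: it has a topmost
node reachable from every node of `S` along a parent path staying inside `S`. -/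
def ConnSubtree (T : RootedTree ι) (S : Set ι) : Prop :=
  ∃ top ∈ S, ∀ p ∈ S, ∃ n, T.parent^[n] p = top ∧ ∀ m ≤ n, T.parent^[m] p ∈ S

end RootedTree

/-- The set of variables occurring in a finite set of atoms. -/
def atomsVars (s : Finset Atom) : Set ℕ := ⋃ B ∈ s, Atom.vars B

/-- The set of variables occurring in a rule. -/
def Rule.vars (r : Rule) : Set ℕ := Atom.vars r.head ∪ atomsVars r.body

/-- The in-node instantiations `Π_p[I] = { σ|_{χ(p)} | λ(p)σ ⊆ I }`. -/
def nodeEval (χp : Set ℕ) (lamp : Finset Atom) (I : Set Fact) : Set (Tuple χp) :=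
  { t | ∃ σ : ℕ → ℕ, (∀ B ∈ lamp, B.subst σ ∈ I) ∧ t = restrictT χp σ }

/-- `Π_p[I, Δ] = { σ|_{χ(p)} | λ(p)σ ⊆ I and λ(p)σ ∩ Δ ≠ ∅ }`. -/
def nodeEvalDelta (χp : Set ℕ) (lamp : Finset Atom) (I Δ : Set Fact) : Set (Tuple χp) :=
  { t | ∃ σ : ℕ → ℕ, (∀ B ∈ lamp, B.subst σ ∈ I) ∧
        (∃ B ∈ lamp, B.subst σ ∈ Δ) ∧ t = restrictT χp σ }

/-- A hypertree decomposition `⟨T, χ, λ⟩` of the rule `r`, with node type `ι`,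
satisfying conditions (1)–(4). -/
structure HTD (r : Rule) (ι : Type) [Fintype ι] where
  T : RootedTree ι
  χ : ι → Set ℕ
  lam : ι → Finset Atom
  lam_sub : ∀ p, lam p ⊆ r.body
  cond1 : ∀ B ∈ r.body, ∃ p, Atom.vars B ⊆ χ p
  cond2 : ∀ v ∈ r.vars, T.ConnSubtree { p | v ∈ χ p }
  cond3 : ∀ p, χ p ⊆ atomsVars (lam p)
  cond4 : ∀ p, atomsVars (lam p) ∩ (⋃ q ∈ T.descendants p, χ q) ⊆ χ p

/-- The decomposition is complete: every body atom `B` belongs to `λ(p)` for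
some node `p` with `var(B) ⊆ χ(p)`. -/
def HTD.Complete {r : Rule} {ι : Type} [Fintype ι] (H : HTD r ι) : Prop :=
  ∀ B ∈ r.body, ∃ p, B ∈ H.lam p ∧ Atom.vars B ⊆ H.χ p

lemma Atom.subst_congr (A : Atom) {σ σ' : ℕ → ℕ}
    (h : ∀ v ∈ A.vars, σ v = σ' v) : A.subst σ = A.subst σ' := by
  unfold Atom.subst
  congr 1
  apply List.map_congr_left
  intro a ha
  cases a with
  | inl v => exact h v ha
  | inr c => rfl

/-- Lemma 3: correctness of hypertree-decomposition-based
rederivation: with surviving instantiations `A p ⊆ Π_p[I]` and overdeleted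
instantiations `re p ⊇ Π_p[I] \ A p`, and recovered instantiations
`R_p = { t ∈ re p | t ∈ Π_p[I] }`: (i) `A p ∪ R_p = Π_p[I]` at every node; and
(ii) for any `Δ_R` contained in the head facts of the cross-node join of the
`A p ∪ R_p` intersected with `Δ`, one has
`Δ_R ∪ { f ∈ Δ | f ∈ r[I] } = r[I] ∩ Δ`. -/
theorem hd_rederivation_correct (r : Rule) (ι : Type) [Fintype ι] (H : HTD r ι)
    (hc : H.Complete) (I Δ : Set Fact)
    (A re : ∀ p : ι, Set (Tuple (H.χ p)))
    (hA : ∀ p, A p ⊆ nodeEval (H.χ p) (H.lam p) I)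
    (hre : ∀ p, nodeEval (H.χ p) (H.lam p) I \ A p ⊆ re p) :
    (∀ p, A p ∪ { t ∈ re p | t ∈ nodeEval (H.χ p) (H.lam p) I } =
        nodeEval (H.χ p) (H.lam p) I) ∧
    ∀ ΔR : Set Fact,
      ΔR ⊆ { f | ∃ τ ∈ projT (Atom.vars r.head)
              (natJoin H.χ (fun p =>
                A p ∪ { t ∈ re p | t ∈ nodeEval (H.χ p) (H.lam p) I })),
            f = r.head.subst (extendT τ) } ∩ Δ →
      ΔR ∪ { f ∈ Δ | f ∈ r.eval I } = r.eval I ∩ Δ := by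
  have part1 : ∀ p, A p ∪ { t ∈ re p | t ∈ nodeEval (H.χ p) (H.lam p) I } =
      nodeEval (H.χ p) (H.lam p) I := by
    intro p
    ext t
    constructor
    · rintro (h | ⟨_, h⟩)
      · exact hA p h
      · exact h
    · intro h
      by_cases hAp : t ∈ A p
      · exact Or.inl hAp
      · exact Or.inr ⟨hre p ⟨h, hAp⟩, h⟩
  refine ⟨part1, ?_⟩
  intro ΔR hΔR
  ext f
  constructor
  · rintro (hf | ⟨hfΔ, hfI⟩)
    · -- f ∈ ΔR : need f ∈ r.eval I ∩ Δ
      obtain ⟨⟨τ, hτ, hfτ⟩, hfΔ⟩ := hΔR hf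
      obtain ⟨t, ht, rfl⟩ := hτ
      refine ⟨⟨extendT t, ?_, ?_⟩, hfΔ⟩
      · intro B hB
        obtain ⟨p, hBp, hvars⟩ := hc B hB
        have htp : restrictT (H.χ p) (extendT t) ∈ nodeEval (H.χ p) (H.lam p) I := by
          rw [← part1 p]; exact ht p
        obtain ⟨σ, hσI, hσeq⟩ := htp
        have : B.subst (extendT t) = B.subst σ := by
          apply Atom.subst_congr
          intro v hv
          have hvχ : v ∈ H.χ p := hvars hv
          have := congrFun hσeq ⟨v, hvχ⟩
          exact this
        rw [this]
        exact hσI B hBp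
      · rw [hfτ]
        apply Atom.subst_congr
        intro v hv
        simp only [extendT, restrictT]
        rw [dif_pos hv]
    · exact ⟨hfI, hfΔ⟩
  · rintro ⟨hfI, hfΔ⟩
    exact Or.inr ⟨hfΔ, hfI⟩

end Datalog
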